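/- Let N ≥ 1 be an integer, ε := 1/N, and let β : ℤ → ℝ be 2N-periodic. For every u ∈ U, the following identities hold: ⟨L₁ u, u⟩ = ‖Du‖²_{ℓ²_ε}, and ⟨L₂ u, u⟩ = 4‖Du‖²_{ℓ²_ε} − ε³ Σ_{ℓ=−N+1}^{N} β_ℓ ((D²u)_ℓ)² + R + S + T, where R := Σ_{ℓ=−N+1}^{N} 2ε³ (D²β)_ℓ ((Du)_ℓ)², S := Σ_{ℓ=−N+1}^{N} ε⁴ (D²β)_ℓ (D²u)_ℓ (Du)_ℓ, and T := Σ_{ℓ=−N+1}^{N} ε³ (D³β)_{ℓ+1} u_ℓ (Du)_{ℓ+1}. -/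

import Mathlib

open Finset

noncomputable section

/-- mesh size ε = 1/N -/
def eps (N : ℕ) : ℝ := 1 / N

/-- the periodic cell {-N+1, …, N} -/
def cell (N : ℕ) : Finset ℤ := Finset.Icc (-(N : ℤ) + 1) N

/-- 2N-periodicity -/
def Per (N : ℕ) (u : ℤ → ℝ) : Prop := ∀ ℓ : ℤ, u (ℓ + 2 * N) = u ℓ

/-- zero mean over a period -/
def MeanZero (N : ℕ) (u : ℤ → ℝ) : Prop := ∑ ℓ ∈ cell N, u ℓ = 0

/-- first discrete derivative (Du)_ℓ = (u_ℓ - u_{ℓ-1})/ε -/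
def D (N : ℕ) (u : ℤ → ℝ) (ℓ : ℤ) : ℝ := (u ℓ - u (ℓ - 1)) / eps N

/-- second discrete derivative (D²u)_ℓ = ((Du)_{ℓ+1} - (Du)_ℓ)/ε -/
def D2 (N : ℕ) (u : ℤ → ℝ) (ℓ : ℤ) : ℝ := (D N u (ℓ + 1) - D N u ℓ) / eps N

/-- third discrete derivative (D³u)_ℓ = ((D²u)_ℓ - (D²u)_{ℓ-1})/ε -/
def D3 (N : ℕ) (u : ℤ → ℝ) (ℓ : ℤ) : ℝ := (D2 N u ℓ - D2 N u (ℓ - 1)) / eps N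

/-- the ℓ²_ε inner product ⟨u,w⟩ = ε Σ u_ℓ w_ℓ -/
def ip (N : ℕ) (u w : ℤ → ℝ) : ℝ := ∑ ℓ ∈ cell N, eps N * (u ℓ * w ℓ)

/-- the squared ℓ²_ε norm ‖u‖² = ε Σ |u_ℓ|² -/
def nsq (N : ℕ) (u : ℤ → ℝ) : ℝ := ∑ ℓ ∈ cell N, eps N * |u ℓ| ^ 2

/-- nearest-neighbour part `(L₁v)_ℓ := (−v_{ℓ+1} + 2v_ℓ − v_{ℓ−1})/ε²` -/
def L1 (N : ℕ) (v : ℤ → ℝ) (ℓ : ℤ) : ℝ :=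
  (-v (ℓ + 1) + 2 * v ℓ - v (ℓ - 1)) / eps N ^ 2

/-- blended second-neighbour part
`(L₂v)_ℓ := β_ℓ(−v_{ℓ+2} + 2v_ℓ − v_{ℓ−2})/ε² + (1−β_ℓ)·4·(−v_{ℓ+1} + 2v_ℓ − v_{ℓ−1})/ε²` -/
def L2 (N : ℕ) (β : ℤ → ℝ) (v : ℤ → ℝ) (ℓ : ℤ) : ℝ :=
  β ℓ * (-v (ℓ + 2) + 2 * v ℓ - v (ℓ - 2)) / eps N ^ 2
    + (1 - β ℓ) * 4 * (-v (ℓ + 1) + 2 * v ℓ - v (ℓ - 1)) / eps N ^ 2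

/-- the error term R -/
def Rterm (N : ℕ) (β u : ℤ → ℝ) : ℝ :=
  ∑ ℓ ∈ cell N, 2 * eps N ^ 3 * D2 N β ℓ * (D N u ℓ) ^ 2

/-- the error term S -/
def Sterm (N : ℕ) (β u : ℤ → ℝ) : ℝ :=
  ∑ ℓ ∈ cell N, eps N ^ 4 * D2 N β ℓ * D2 N u ℓ * D N u ℓ

/-- the error term T -/
def Tterm (N : ℕ) (β u : ℤ → ℝ) : ℝ :=
  ∑ ℓ ∈ cell N, eps N ^ 3 * D3 N β (ℓ + 1) * u ℓ * D N u (ℓ + 1)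

/-!
Both identities are summations by parts on one period. For each, the difference of the two
integrands at `ℓ` is a forward difference `H (ℓ + 1) - H ℓ` of an explicit 2N-periodic flux `H`
(a local quadratic expression in `u`, weighted by `β` for `L₂`), so it sums to zero over the cell.
For `L₂` one first splits off `4 L₁`, whose contribution `4 ‖Du‖²` is the first identity.
-/

namespace Per

variable {N : ℕ} {u : ℤ → ℝ}

lemma apply_add_add (hu : Per N u) (ℓ k : ℤ) : u (ℓ + 2 * N + k) = u (ℓ + k) := by
  rw [add_right_comm, hu]

lemma apply_add_sub (hu : Per N u) (ℓ k : ℤ) : u (ℓ + 2 * N - k) = u (ℓ - k) := by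
  rw [add_sub_right_comm, hu]

end Per

lemma eps_ne_zero_of_mem_cell {N : ℕ} {ℓ : ℤ} (hℓ : ℓ ∈ cell N) : eps N ≠ 0 := by
  have hN : N ≠ 0 := by
    rintro rfl
    simp [cell] at hℓ
  simpa [eps] using hN

lemma sum_Ico_sub_int (H : ℤ → ℝ) {a b : ℤ} (hab : a ≤ b) :
    ∑ ℓ ∈ Ico a b, (H (ℓ + 1) - H ℓ) = H b - H a := by
  induction b, hab using Int.leInduction with
  | base => simp
  | succ b hab ih =>
    rw [← insert_Ico_right_eq_Ico_add_one_of_not_isMax hab (not_isMax b),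
      sum_insert (by simp), ih]
    ring

lemma sum_cell_sub_eq_zero {N : ℕ} {H : ℤ → ℝ} (hH : Per N H) :
    ∑ ℓ ∈ cell N, (H (ℓ + 1) - H ℓ) = 0 := by
  rw [cell, ← Ico_add_one_right_eq_Icc, sum_Ico_sub_int H (by omega),
    show (N : ℤ) + 1 = -N + 1 + 2 * N by ring, hH, sub_self]

lemma sum_cell_eq_of_sub_eq_sub {N : ℕ} {f g H : ℤ → ℝ} (hH : Per N H)
    (hfg : ∀ ℓ ∈ cell N, f ℓ - g ℓ = H (ℓ + 1) - H ℓ) :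
    ∑ ℓ ∈ cell N, f ℓ = ∑ ℓ ∈ cell N, g ℓ := by
  rw [← sub_eq_zero, ← sum_sub_distrib, sum_congr rfl hfg, sum_cell_sub_eq_zero hH]

def fluxL1 (N : ℕ) (u : ℤ → ℝ) (ℓ : ℤ) : ℝ := -(u (ℓ - 1) * D N u ℓ)

-- Found by solving `fluxL2 (ℓ + 1) - fluxL2 ℓ = (difference of the integrands in ip_L2_self_sub)`
-- for a quadratic form in `u_{ℓ-2}, …, u_{ℓ+1}` with weights `β_{ℓ-1}, β_ℓ, β_{ℓ+1}`, over `ε`.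
def fluxL2 (N : ℕ) (β u : ℤ → ℝ) (ℓ : ℤ) : ℝ :=
  (β (ℓ - 1) * (u (ℓ - 1) ^ 2 + u ℓ ^ 2 - u (ℓ - 1) * u ℓ - u (ℓ - 1) * u (ℓ + 1))
    + β ℓ * (u (ℓ - 2) * u ℓ + 2 * u (ℓ - 1) * u ℓ - 3 * u (ℓ - 1) ^ 2)
    + β (ℓ + 1) * (u (ℓ - 1) ^ 2 - u (ℓ - 1) * u ℓ)) / eps N

section

variable {N : ℕ} {β u : ℤ → ℝ}

lemma per_fluxL1 (hu : Per N u) : Per N (fluxL1 N u) := by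
  intro ℓ
  simp only [fluxL1, D, hu.apply_add_sub, hu ℓ]

lemma per_fluxL2 (hβ : Per N β) (hu : Per N u) : Per N (fluxL2 N β u) := by
  intro ℓ
  simp only [fluxL2, hu.apply_add_sub, hu.apply_add_add, hβ.apply_add_sub, hβ.apply_add_add,
    hu ℓ, hβ ℓ]

lemma ip_L1_self (hu : Per N u) : ip N (L1 N u) u = nsq N (D N u) := by
  refine sum_cell_eq_of_sub_eq_sub (per_fluxL1 hu) fun ℓ hℓ => ?_
  have := eps_ne_zero_of_mem_cell hℓ
  simp only [L1, fluxL1, D, sq_abs, add_sub_cancel_right]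
  field_simp
  ring

lemma ip_L2_self_sub (hβ : Per N β) (hu : Per N u) :
    ip N (L2 N β u) u - 4 * ip N (L1 N u) u
      = -(eps N ^ 3 * ∑ ℓ ∈ cell N, β ℓ * (D2 N u ℓ) ^ 2)
        + Rterm N β u + Sterm N β u + Tterm N β u := by
  simp only [ip, Rterm, Sterm, Tterm, mul_sum, ← sum_sub_distrib, ← sum_neg_distrib,
    ← sum_add_distrib]
  refine sum_cell_eq_of_sub_eq_sub (per_fluxL2 hβ hu) fun ℓ hℓ => ?_
  have := eps_ne_zero_of_mem_cell hℓ
  simp only [L1, L2, fluxL2, D, D2, D3, add_sub_cancel_right,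
    show ℓ + 1 - 2 = ℓ - 1 by ring, show ℓ + 1 + 1 = ℓ + 2 by ring,
    show ℓ + 2 - 1 = ℓ + 1 by ring]
  field_simp
  ring

end

theorem stmt_4_general (N : ℕ) (β : ℤ → ℝ) (hβper : Per N β)
    (u : ℤ → ℝ) (hper : Per N u) :
    ip N (L1 N u) u = nsq N (D N u) ∧
      ip N (L2 N β u) u
        = 4 * nsq N (D N u) - eps N ^ 3 * ∑ ℓ ∈ cell N, β ℓ * (D2 N u ℓ) ^ 2
            + Rterm N β u + Sterm N β u + Tterm N β u := by
  have h1 := ip_L1_self hper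
  exact ⟨h1, by linear_combination ip_L2_self_sub hβper hper + 4 * h1⟩

/-- divergence form of the quadratic forms of `L₁` and `L₂`. -/
theorem stmt_4 (N : ℕ) (hN : 1 ≤ N) (β : ℤ → ℝ) (hβper : Per N β)
    (u : ℤ → ℝ) (hper : Per N u) (hmean : MeanZero N u) :
    ip N (L1 N u) u = nsq N (D N u) ∧
      ip N (L2 N β u) u
        = 4 * nsq N (D N u) - eps N ^ 3 * ∑ ℓ ∈ cell N, β ℓ * (D2 N u ℓ) ^ 2
            + Rterm N β u + Sterm N β u + Tterm N β u :=
  stmt_4_general N β hβper u hper
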